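/- arXiv:2301.03171 — 3 statements merged into one kernel-verified Lean document; each statement's English description precedes it below -/
import Mathlib

section
/- (Tail bound for sampling without replacement / hypergeometric distribution) Let X₁,…,X_N ∈ {0,1} with M = ∑ᵢ Xᵢ, and let Ŷ₁,…,Ŷ_n (n ≤ N) be sampled uniformly at random without replacement from the Xᵢ, with m̂ = ∑ᵢ Ŷᵢ. Then for any δ ∈ [0, M/N], Pr(m̂/n ≤ M/N − δ) ≤ 2^{−n D(M/N − δ ∥ M/N)}, where D(x∥y) = x log₂(x/y) + (1−x) log₂((1−x)/(1−y)). -/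
open Real
open scoped Classical

noncomputable section

/-- Binary Kullback–Leibler divergence in bits:
`D(x‖y) = x log₂(x/y) + (1−x) log₂((1−x)/(1−y))`. -/
def klBin (x y : ℝ) : ℝ :=
  x * Real.logb 2 (x / y) + (1 - x) * Real.logb 2 ((1 - x) / (1 - y))

/-!
Chernoff's method. Let `p = M/N` and `x = p - δ`. For `0 ≤ t ≤ 1` every `n`-subset `s` in the
event has `t ^ m̂(s) ≥ t ^ (n x)`, so the number of such subsets is at most
`t ^ (-n x) ∑_{|s| = n} t ^ m̂(s)`. This sum is the elementary symmetric polynomial `e_n` of the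
numbers `t ^ Xᵢ`, and Maclaurin's inequality bounds it by `C(N, n)` times the `n`-th power of
their mean `1 - p + p t`: the hypergeometric generating function is dominated by the binomial
one. The choice `t = (x / (1 - x)) / (p / (1 - p))` turns the bound into `2 ^ (-n D(x‖p))`.
When `p = 1` this choice degenerates, but then `D(x‖1) ≤ 0` and the bound is trivial.
-/

open Finset

theorem Multiset.esymm_cons_succ {R : Type*} [CommSemiring R] (a : R) (s : Multiset R) (k : ℕ) :
    (a ::ₘ s).esymm (k + 1) = s.esymm (k + 1) + a * s.esymm k := by
  simp [esymm, powersetCard_cons, map_map, sum_map_mul_left]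

section OrderedRing

variable {R : Type*} [CommRing R] [LinearOrder R] [IsStrictOrderedRing R]

theorem pow_succ_add_mul_sub_le_pow_succ (k : ℕ) {a c : R} (ha : 0 ≤ a) (hc : 0 ≤ c) :
    a ^ (k + 1) + (k + 1) * a ^ k * (c - a) ≤ c ^ (k + 1) := by
  induction k with
  | zero => simp
  | succ k ih =>
    have hmono : 0 ≤ (c - a) * (c ^ (k + 1) - a ^ (k + 1)) := by
      rcases le_total a c with h | h
      · exact mul_nonneg (sub_nonneg.2 h) (sub_nonneg.2 (pow_le_pow_left₀ ha h _))
      · exact mul_nonneg_of_nonpos_of_nonpos (sub_nonpos.2 h)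
          (sub_nonpos.2 (pow_le_pow_left₀ hc h _))
    push_cast
    linear_combination mul_le_mul_of_nonneg_left ih ha + hmono

/-- The induction step of Maclaurin's inequality: `a` and `c` are the means of `m` numbers before
and after adding the number `b`. -/
theorem choose_mul_pow_add_choose_mul_mul_pow_le (m k : ℕ) {a b c : R} (ha : 0 ≤ a)
    (hc : 0 ≤ c) (hmean : (m + 1) * c = m * a + b) :
    m.choose (k + 1) * a ^ (k + 1) + m.choose k * b * a ^ k ≤
      (m + 1).choose (k + 1) * c ^ (k + 1) := by
  have pascal : ((m + 1).choose (k + 1) : R) = m.choose k + m.choose (k + 1) := by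
    exact_mod_cast Nat.choose_succ_succ m k
  have absorb : ((m : R) + 1) * m.choose k = (m + 1).choose (k + 1) * (k + 1) := by
    exact_mod_cast Nat.add_one_mul_choose_eq m k
  calc (m.choose (k + 1) : R) * a ^ (k + 1) + m.choose k * b * a ^ k
      = (m + 1).choose (k + 1) * (a ^ (k + 1) + (k + 1) * a ^ k * (c - a)) := by
        rw [show b = (m + 1) * c - m * a by linear_combination -hmean]
        linear_combination (a ^ k * c - a ^ (k + 1)) * absorb - a ^ (k + 1) * pascal
    _ ≤ (m + 1).choose (k + 1) * c ^ (k + 1) := by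
        gcongr
        exact pow_succ_add_mul_sub_le_pow_succ k ha hc

end OrderedRing

section Maclaurin

variable {𝕜 : Type*} [Field 𝕜] [LinearOrder 𝕜] [IsStrictOrderedRing 𝕜]

/-- Maclaurin's inequality `e_k / C(m, k) ≤ (e_1 / m) ^ k`. -/
theorem Multiset.esymm_le_choose_mul_mean_pow (s : Multiset 𝕜) (hs : ∀ x ∈ s, 0 ≤ x) (k : ℕ) :
    s.esymm k ≤ s.card.choose k * (s.sum / s.card) ^ k := by
  induction s using Multiset.induction_on generalizing k with
  | empty => cases k <;> simp [esymm, powersetCard_zero_left, powersetCard_zero_right]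
  | cons a s ih =>
    rcases k with _ | k
    · simp [esymm, powersetCard_zero_left]
    have ha : 0 ≤ a := hs a (mem_cons_self a s)
    have hs' : ∀ x ∈ s, 0 ≤ x := fun x hx => hs x (mem_cons_of_mem hx)
    have hsum : 0 ≤ s.sum := sum_nonneg hs'
    have hmean : ((s.card + 1 : ℕ) : 𝕜) * ((a + s.sum) / (s.card + 1 : ℕ)) =
        s.card * (s.sum / s.card) + a := by
      rcases s.card.eq_zero_or_pos with h | h
      · simp [card_eq_zero.1 h]
      · push_cast
        field_simp
        ring
    rw [esymm_cons_succ, card_cons, sum_cons]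
    calc s.esymm (k + 1) + a * s.esymm k
        ≤ s.card.choose (k + 1) * (s.sum / s.card) ^ (k + 1) +
            s.card.choose k * a * (s.sum / s.card) ^ k := by
          rw [mul_assoc _ a, mul_left_comm]
          gcongr
          · exact ih hs' (k + 1)
          · exact ih hs' k
      _ ≤ _ := by
          push_cast at hmean ⊢
          exact choose_mul_pow_add_choose_mul_mul_pow_le _ k (by positivity) (by positivity) hmean

theorem Finset.sum_powersetCard_prod_le_choose_mul_mean_pow {ι : Type*} (S : Finset ι)
    (f : ι → 𝕜) (hf : ∀ i ∈ S, 0 ≤ f i) (k : ℕ) :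
    ∑ t ∈ S.powersetCard k, ∏ i ∈ t, f i ≤ (#S).choose k * ((∑ i ∈ S, f i) / #S) ^ k := by
  simpa [esymm_map_val] using (S.val.map f).esymm_le_choose_mul_mean_pow (by simpa using hf) k

end Maclaurin

theorem pow_eq_one_add_sub_one_mul {R : Type*} [CommRing R] (t : R) {k : ℕ} (hk : k ≤ 1) :
    t ^ k = 1 + (t - 1) * k := by
  interval_cases k <;> simp

theorem Finset.sum_pow_eq_card_add_sub_one_mul_sum {R ι : Type*} [CommRing R] (S : Finset ι)
    (t : R) {X : ι → ℕ} (hX : ∀ i ∈ S, X i ≤ 1) :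
    ∑ i ∈ S, t ^ X i = #S + (t - 1) * ∑ i ∈ S, X i := by
  rw [sum_congr rfl fun i hi => pow_eq_one_add_sub_one_mul t (hX i hi)]
  simp [sum_add_distrib, mul_sum]

theorem Finset.card_filter_mul_rpow_le_sum_pow {β : Type*} (A : Finset β) (g : β → ℕ)
    {t y : ℝ} (ht0 : 0 ≤ t) (ht1 : t ≤ 1) :
    (#(A.filter fun b => (g b : ℝ) ≤ y) : ℝ) * t ^ y ≤ ∑ b ∈ A, t ^ g b := by
  rw [← nsmul_eq_mul, ← sum_const]
  calc ∑ _ ∈ A.filter fun b => (g b : ℝ) ≤ y, t ^ y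
      ≤ ∑ b ∈ A.filter fun b => (g b : ℝ) ≤ y, t ^ g b := by
        refine sum_le_sum fun b hb => ?_
        rw [← Real.rpow_natCast]
        exact Real.rpow_le_rpow_of_exponent_ge' ht0 ht1 (Nat.cast_nonneg _) (mem_filter.1 hb).2
    _ ≤ ∑ b ∈ A, t ^ g b :=
        sum_le_sum_of_subset_of_nonneg (filter_subset _ _) fun _ _ _ => by positivity

/-- The odds ratio of `x` against `p`; it minimises `(1 - p + p t) ^ n / t ^ (n x)` over `t > 0`. -/
def oddsRatio (x p : ℝ) : ℝ := x * (1 - p) / ((1 - x) * p)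

section OddsRatio

variable {x p : ℝ}

theorem oddsRatio_nonneg (hx : 0 ≤ x) (hxp : x ≤ p) (hp : p < 1) : 0 ≤ oddsRatio x p := by
  have : 0 ≤ 1 - x := by linarith
  have : 0 ≤ 1 - p := by linarith
  have : 0 ≤ p := by linarith
  unfold oddsRatio
  positivity

theorem oddsRatio_le_one (hx : 0 ≤ x) (hxp : x ≤ p) (hp : p < 1) : oddsRatio x p ≤ 1 :=
  div_le_one_of_le₀ (by nlinarith) (by nlinarith)

theorem one_add_oddsRatio_sub_one_mul (hx : 0 ≤ x) (hxp : x ≤ p) (hp : p < 1) :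
    1 + (oddsRatio x p - 1) * p = (1 - p) / (1 - x) := by
  rcases hx.eq_or_lt with rfl | hx
  · simp [oddsRatio]
    ring
  · have : 1 - x ≠ 0 := by linarith
    have : p ≠ 0 := by linarith
    unfold oddsRatio
    field_simp
    ring

theorem oddsRatio_rpow_mul_pos (n : ℝ) (hx : 0 ≤ x) (hxp : x ≤ p) (hp : p < 1) :
    0 < oddsRatio x p ^ (n * x) := by
  rcases hx.eq_or_lt with rfl | hx
  · simp
  · have : 0 < 1 - x := by linarith
    have : 0 < 1 - p := by linarith
    have : 0 < p := by linarith
    unfold oddsRatio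
    positivity

theorem two_rpow_neg_mul_klBin (n : ℕ) (hx : 0 ≤ x) (hxp : x ≤ p) (hp : p < 1) :
    (2 : ℝ) ^ (-(n : ℝ) * klBin x p) =
      ((1 - p) / (1 - x)) ^ n / oddsRatio x p ^ ((n : ℝ) * x) := by
  have hq : 0 < 1 - p := by linarith
  rcases hx.eq_or_lt with rfl | hx
  · rw [← Real.rpow_logb two_pos (by norm_num) (by positivity : (0 : ℝ) < (1 - p) / (1 - 0))]
    simp [klBin, Real.logb_inv, ← Real.rpow_natCast, ← Real.rpow_mul, mul_comm]
  · have hx1 : 0 < 1 - x := by linarith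
    have hp0 : 0 < p := by linarith
    have ht : 0 < oddsRatio x p := by unfold oddsRatio; positivity
    rw [← Real.rpow_logb two_pos (by norm_num)
      (by positivity : 0 < ((1 - p) / (1 - x)) ^ n / oddsRatio x p ^ ((n : ℝ) * x))]
    congr 1
    rw [Real.logb_div (by positivity) (Real.rpow_pos_of_pos ht _).ne', Real.logb_pow,
      Real.logb_rpow_eq_mul_logb_of_pos ht, oddsRatio, klBin, Real.logb_div hq.ne' hx1.ne',
      Real.logb_div (mul_pos hx hq).ne' (mul_pos hx1 hp0).ne', Real.logb_mul hx.ne' hq.ne',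
      Real.logb_mul hx1.ne' hp0.ne', Real.logb_div hx.ne' hp0.ne', Real.logb_div hx1.ne' hq.ne']
    ring

end OddsRatio

theorem klBin_one_nonpos {x : ℝ} (hx0 : 0 ≤ x) (hx1 : x ≤ 1) : klBin x 1 ≤ 0 := by
  -- the second term is `(1 - x) * logb 2 ((1 - x) / 0) = 0`
  simpa [klBin] using mul_nonpos_of_nonneg_of_nonpos hx0 (Real.logb_nonpos one_lt_two hx0 hx1)

/-- tail bound for sampling without replacement: for `X₁,…,X_N ∈ {0,1}`
with `M = ∑ Xᵢ`, a uniformly random `n`-element subset `s` (drawn without replacement)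
with `m̂ = ∑_{i∈s} Xᵢ`, and any `δ ∈ [0, M/N]`,
`Pr(m̂/n ≤ M/N − δ) ≤ 2^{−n D(M/N−δ ‖ M/N)}`. -/
theorem hypergeometric_tail_bound (N n : ℕ) (hn : 0 < n) (hnN : n ≤ N)
    (X : Fin N → ℕ) (hX : ∀ i, X i ≤ 1) (M : ℕ) (hM : M = ∑ i, X i)
    (δ : ℝ) (hδ0 : 0 ≤ δ) (hδ1 : δ ≤ (M : ℝ) / N) :
    ((Finset.univ.filter (fun s : Finset (Fin N) =>
          s.card = n ∧ ((∑ i ∈ s, X i : ℕ) : ℝ) / n ≤ (M : ℝ) / N - δ)).card : ℝ) /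
        (N.choose n) ≤
      (2 : ℝ) ^ (-(n : ℝ) * klBin ((M : ℝ) / N - δ) ((M : ℝ) / N)) := by
  have hN : (0 : ℝ) < N := by exact_mod_cast hn.trans_le hnN
  have hC : (0 : ℝ) < N.choose n := by exact_mod_cast Nat.choose_pos hnN
  have hMN : M ≤ N := by simpa [← hM] using sum_le_card_nsmul univ X 1 fun i _ => hX i
  set p := (M : ℝ) / N
  set x := p - δ
  have hevent : univ.filter (fun s : Finset (Fin N) =>
      s.card = n ∧ ((∑ i ∈ s, X i : ℕ) : ℝ) / n ≤ x) =
      (univ.powersetCard n).filter fun s => ((∑ i ∈ s, X i : ℕ) : ℝ) ≤ n * x := by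
    ext s
    simp [mem_powersetCard, div_le_iff₀ (Nat.cast_pos.2 hn : (0 : ℝ) < n), mul_comm]
  rw [hevent]
  rcases (show p ≤ 1 from div_le_one_of_le₀ (by exact_mod_cast hMN) hN.le).eq_or_lt with hp1 | hp1
  · have hkl : klBin x p ≤ 0 := hp1 ▸ klBin_one_nonpos (by linarith) (by linarith)
    calc _ ≤ (1 : ℝ) := by
          rw [div_le_one hC]
          exact_mod_cast (card_filter_le _ _).trans (by simp)
      _ ≤ _ := Real.one_le_rpow one_le_two (by nlinarith)
  have hx0 : 0 ≤ x := by linarith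
  have hxp : x ≤ p := by linarith
  set t := oddsRatio x p
  have hgen : ∑ s ∈ univ.powersetCard n, t ^ (∑ i ∈ s, X i) ≤
      N.choose n * (1 + (t - 1) * p) ^ n := by
    have := univ.sum_powersetCard_prod_le_choose_mul_mean_pow (fun i => t ^ X i)
      (fun i _ => pow_nonneg (oddsRatio_nonneg hx0 hxp hp1) _) n
    simp only [prod_pow_eq_pow_sum] at this
    rwa [sum_pow_eq_card_add_sub_one_mul_sum _ _ fun i _ => hX i, card_univ, Fintype.card_fin,
      ← hM, add_div, div_self hN.ne', mul_div_assoc] at this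
  rw [two_rpow_neg_mul_klBin n hx0 hxp hp1, ← one_add_oddsRatio_sub_one_mul hx0 hxp hp1,
    div_le_div_iff₀ hC (oddsRatio_rpow_mul_pos _ hx0 hxp hp1)]
  calc _ ≤ ∑ s ∈ univ.powersetCard n, t ^ (∑ i ∈ s, X i) :=
        card_filter_mul_rpow_le_sum_pow _ _ (oddsRatio_nonneg hx0 hxp hp1)
          (oddsRatio_le_one hx0 hxp hp1)
    _ ≤ _ := by linarith
end
end

section
/- (Confidence upper bound from simple random sampling) Let X₁,…,X_N ∈ {0,1} with M = ∑ᵢ Xᵢ, let Ŷ₁,…,Ŷ_n be sampled uniformly without replacement, m̂ = ∑ᵢ Ŷᵢ, and ε ∈ (0,1). Define M̃_{N,n,ε}(m) for 0 ≤ m < n as the unique value satisfying m/n ≤ M̃/N ≤ 1 and D(m/n ∥ M̃/N) = −(1/n) log ε, and M̃_{N,n,ε}(n) = N. Then Pr(M̃_{N,n,ε}(m̂) < M) ≤ ε. -/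
open Real
open scoped Classical

noncomputable section

/-!
Let `k` be the largest sample count `m̂` at which the bound fails, so that every failing sample
has `m̂ ≤ k` and `x := k / n ≤ M̃(k) / N < M / N =: p`. Chvátal's inequality
`E[u ^ m̂ * v ^ (n - m̂)] ≤ (p u + (1 - p) v) ^ n` for `0 ≤ u ≤ v` follows by expanding in powers
of `v - u` and bounding the factorial moments `E[C(n - m̂, r)] ≤ C(n, r) (1 - p) ^ r`. With
`u = x / p` and `v = (1 - x) / (1 - p)` it gives `Pr(m̂ ≤ k) ≤ 2 ^ (-n D(x ‖ p))`, and since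
`D(x ‖ ·)` increases on `[x, 1)` this is at most `2 ^ (-n D(x ‖ M̃(k) / N)) = ε`.
-/

open Finset

theorem Nat.choose_mul_pow_le_choose_mul_pow {a b : ℕ} (hab : a ≤ b) (r : ℕ) :
    a.choose r * b ^ r ≤ b.choose r * a ^ r := by
  have hdesc : a.descFactorial r * b ^ r ≤ b.descFactorial r * a ^ r := by
    have hpow (c : ℕ) : c ^ r = ∏ _i ∈ range r, c := by simp
    rw [Nat.descFactorial_eq_prod_range, Nat.descFactorial_eq_prod_range, hpow a, hpow b,
      ← prod_mul_distrib, ← prod_mul_distrib]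
    refine prod_le_prod' fun i _ => ?_
    rcases le_or_gt a i with hai | hia
    · simp [Nat.sub_eq_zero_of_le hai]
    · have := Nat.mul_le_mul_left i hab
      rw [Nat.sub_mul, Nat.sub_mul, Nat.mul_comm b a]
      omega
  rw [Nat.descFactorial_eq_factorial_mul_choose, Nat.descFactorial_eq_factorial_mul_choose,
    mul_assoc, mul_assoc] at hdesc
  exact Nat.le_of_mul_le_mul_left hdesc (Nat.factorial_pos r)

theorem Nat.choose_mul_choose_sub_le {M N n r : ℕ} (hMN : M ≤ N) (hnN : n ≤ N) (hrn : r ≤ n) :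
    (M.choose r * (N - r).choose (n - r) : ℝ) ≤ N.choose n * n.choose r * ((M : ℝ) / N) ^ r := by
  rcases N.eq_zero_or_pos with rfl | hN
  · obtain rfl : n = 0 := by omega
    obtain rfl : r = 0 := by omega
    simp
  have hcount : (M.choose r : ℝ) ≤ N.choose r * ((M : ℝ) / N) ^ r := by
    rw [div_pow, mul_div_assoc', le_div_iff₀ (by positivity)]
    exact_mod_cast Nat.choose_mul_pow_le_choose_mul_pow hMN r
  have hpascal : (N.choose n * n.choose r : ℝ) = N.choose r * (N - r).choose (n - r) := by
    exact_mod_cast Nat.choose_mul hrn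
  rw [hpascal]
  calc (M.choose r * (N - r).choose (n - r) : ℝ)
      ≤ N.choose r * ((M : ℝ) / N) ^ r * (N - r).choose (n - r) := by gcongr
    _ = N.choose r * (N - r).choose (n - r) * ((M : ℝ) / N) ^ r := by ring

theorem add_pow_mul_pow_sub_eq_sum {R : Type*} [CommSemiring R] (u y : R) {m n : ℕ} (hmn : m ≤ n) :
    (u + y) ^ m * u ^ (n - m) = ∑ r ∈ range (n + 1), m.choose r * y ^ r * u ^ (n - r) := by
  rw [add_comm, add_pow, sum_mul]
  refine (sum_congr rfl fun r hr => ?_).trans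
    (sum_subset (range_subset_range.2 (by omega)) fun r _ hr => ?_)
  · have hpow : u ^ (m - r) * u ^ (n - m) = u ^ (n - r) := by
      rw [← pow_add]
      congr 1
      simp only [mem_range] at hr
      omega
    rw [← hpow]
    ring
  · rw [Nat.choose_eq_zero_of_lt (by simpa using hr)]
    simp

theorem pow_mul_pow_sub_le_pow_mul_pow_sub {R : Type*} [CommSemiring R] [PartialOrder R]
    [IsOrderedRing R] {u v : R} (hu : 0 ≤ u) (huv : u ≤ v) {j k n : ℕ} (hjk : j ≤ k) (hkn : k ≤ n) :
    u ^ k * v ^ (n - k) ≤ u ^ j * v ^ (n - j) :=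
  calc u ^ k * v ^ (n - k) = u ^ j * u ^ (k - j) * v ^ (n - k) := by
        rw [← pow_add, Nat.add_sub_cancel' hjk]
    _ ≤ u ^ j * v ^ (k - j) * v ^ (n - k) := by
        have := hu.trans huv
        gcongr
    _ = u ^ j * v ^ (n - j) := by
        rw [mul_assoc, ← pow_add]
        congr 2
        omega

theorem klBin_eq_log_div_log_two (x y : ℝ) :
    klBin x y = (x * log (x / y) + (1 - x) * log ((1 - x) / (1 - y))) / log 2 := by
  simp only [klBin, logb]
  ring

theorem log_div_add_one_sub_div_le {a b c : ℝ} (ha : 0 < a) (hb : 0 < b) (hc : 0 < c) :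
    log (a / b) + (1 - c / b) ≤ log (a / c) := by
  have hsplit : a / c = a / b * (b / c) := by field_simp
  have hlog := one_sub_inv_le_log_of_pos (div_pos hb hc)
  rw [inv_div] at hlog
  rw [hsplit, log_mul (by positivity) (by positivity)]
  linarith

theorem klBin_le_klBin_of_le {x q p : ℝ} (hx : 0 ≤ x) (hxq : x ≤ q) (hqp : q ≤ p) (hp : p < 1) :
    klBin x q ≤ klBin x p := by
  rw [klBin_eq_log_div_log_two, klBin_eq_log_div_log_two]
  gcongr ?_ / _
  have hq1 : 0 < 1 - q := by linarith
  have hx1 : 0 < 1 - x := by linarith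
  have hzeros := mul_le_mul_of_nonneg_left
    (log_div_add_one_sub_div_le hx1 hq1 (by linarith : 0 < 1 - p)) hx1.le
  rcases hx.eq_or_lt with rfl | hx
  · have : 0 ≤ 1 - (1 - p) / (1 - q) := by rw [sub_nonneg, div_le_one hq1]; linarith
    nlinarith
  have hq := hx.trans_le hxq
  have hones := mul_le_mul_of_nonneg_left
    (log_div_add_one_sub_div_le hx hq (hq.trans_le hqp)) hx.le
  have hfirst : x * (1 - p / q) + (1 - x) * (1 - (1 - p) / (1 - q))
      = (p - q) * ((1 - x) / (1 - q) - x / q) := by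
    field_simp
    ring
  have hxq' : x / q ≤ 1 := div_le_one_of_le₀ hxq hq.le
  have hxq'' : 1 ≤ (1 - x) / (1 - q) := by rw [le_div_iff₀ hq1]; linarith
  have := mul_nonneg (sub_nonneg.2 hqp) (by linarith : 0 ≤ (1 - x) / (1 - q) - x / q)
  nlinarith

theorem two_rpow_mul_klBin {n k : ℕ} (hkn : k ≤ n) {p : ℝ} (hp0 : 0 < p) (hp1 : p < 1) :
    (2 : ℝ) ^ (n * klBin (k / n) p) = (k / n / p) ^ k * ((1 - k / n) / (1 - p)) ^ (n - k) := by
  rcases n.eq_zero_or_pos with rfl | hn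
  · obtain rfl : k = 0 := by omega
    simp
  have hn' : (n : ℝ) ≠ 0 := by positivity
  have hk0 : 0 < ((k : ℝ) / n / p) ^ k := by
    rcases k.eq_zero_or_pos with rfl | hk
    · simp
    · positivity
  have hk1 : 0 < ((1 - k / n) / (1 - p) : ℝ) ^ (n - k) := by
    rcases hkn.eq_or_lt with rfl | hkn
    · simp
    · have : (k : ℝ) / n < 1 := by rw [div_lt_one (by positivity)]; exact_mod_cast hkn
      exact pow_pos (div_pos (by linarith) (by linarith)) _
  rw [← rpow_logb two_pos (by norm_num) (mul_pos hk0 hk1)]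
  congr 1
  rw [logb, log_mul hk0.ne' hk1.ne', log_pow, log_pow, Nat.cast_sub hkn, klBin_eq_log_div_log_two]
  field_simp

section Sampling

variable {α : Type*} [DecidableEq α]

theorem Finset.powersetCard_inter_eq_filter_subset (r : ℕ) (s B : Finset α) :
    powersetCard r (s ∩ B) = (powersetCard r B).filter (· ⊆ s) := by
  ext T
  simp only [mem_powersetCard, mem_filter, subset_inter_iff]
  tauto

variable [Fintype α]

theorem Finset.sum_powersetCard_choose_card_inter (B : Finset α) {n r : ℕ} (hrn : r ≤ n) :
    ∑ s ∈ powersetCard n univ, (#(s ∩ B)).choose r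
      = (#B).choose r * (Fintype.card α - r).choose (n - r) := by
  calc ∑ s ∈ powersetCard n univ, (#(s ∩ B)).choose r
      = ∑ s ∈ powersetCard n univ, #((powersetCard r B).bipartiteAbove (fun s T => T ⊆ s) s) := by
        simp only [bipartiteAbove, ← powersetCard_inter_eq_filter_subset, card_powersetCard]
    _ = ∑ T ∈ powersetCard r B, #((powersetCard n univ).bipartiteBelow (fun s T => T ⊆ s) T) :=
        sum_card_bipartiteAbove_eq_sum_card_bipartiteBelow _
    _ = ∑ _T ∈ powersetCard r B, (Fintype.card α - r).choose (n - r) := by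
        refine sum_congr rfl fun T hT => ?_
        obtain ⟨-, hTr⟩ := mem_powersetCard.1 hT
        rw [bipartiteBelow, card_filter_powersetCard_subset T univ n (subset_univ T) (hTr ▸ hrn),
          card_univ, hTr]
    _ = (#B).choose r * (Fintype.card α - r).choose (n - r) := by
        rw [sum_const, card_powersetCard, smul_eq_mul]

theorem Finset.sum_powersetCard_add_pow_mul_pow_le (B : Finset α) {n : ℕ}
    (hn : n ≤ Fintype.card α) {u y : ℝ} (hu : 0 ≤ u) (hy : 0 ≤ y) :
    ∑ s ∈ powersetCard n univ, (u + y) ^ #(s ∩ B) * u ^ #(s \ B)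
      ≤ (Fintype.card α).choose n * (u + #B / Fintype.card α * y) ^ n := by
  set N := Fintype.card α
  have hexpand : ∀ s ∈ powersetCard n univ, (u + y) ^ #(s ∩ B) * u ^ #(s \ B)
      = ∑ r ∈ range (n + 1), ((#(s ∩ B)).choose r : ℝ) * y ^ r * u ^ (n - r) := by
    intro s hs
    have hcard := card_sdiff_add_card_inter s B
    rw [(mem_powersetCard.1 hs).2] at hcard
    rw [← add_pow_mul_pow_sub_eq_sum u y (by omega : #(s ∩ B) ≤ n),
      show #(s \ B) = n - #(s ∩ B) by omega]
  calc ∑ s ∈ powersetCard n univ, (u + y) ^ #(s ∩ B) * u ^ #(s \ B)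
      = ∑ r ∈ range (n + 1),
          ((#B).choose r * (N - r).choose (n - r) : ℝ) * y ^ r * u ^ (n - r) := by
        rw [sum_congr rfl hexpand, sum_comm]
        refine sum_congr rfl fun r hr => ?_
        rw [← sum_mul, ← sum_mul, ← Nat.cast_sum,
          sum_powersetCard_choose_card_inter B (Nat.lt_succ_iff.1 (mem_range.1 hr)), Nat.cast_mul]
    _ ≤ ∑ r ∈ range (n + 1),
          N.choose n * n.choose r * ((#B : ℝ) / N) ^ r * y ^ r * u ^ (n - r) := by
        refine sum_le_sum fun r hr => ?_
        gcongr ?_ * _ * _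
        exact Nat.choose_mul_choose_sub_le (card_le_univ B) hn (Nat.lt_succ_iff.1 (mem_range.1 hr))
    _ = N.choose n * (u + #B / N * y) ^ n := by
        rw [add_comm u, add_pow, mul_sum]
        refine sum_congr rfl fun r _ => ?_
        ring

theorem Finset.card_filter_card_inter_le_le (A : Finset α) {n k : ℕ} (hkn : k ≤ n)
    (hn : n ≤ Fintype.card α) (hp0 : 0 < (#A : ℝ) / Fintype.card α)
    (hp1 : (#A : ℝ) / Fintype.card α < 1) (hkp : (k : ℝ) / n ≤ #A / Fintype.card α) :
    (#{s ∈ powersetCard n univ | #(s ∩ A) ≤ k} : ℝ)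
      ≤ (Fintype.card α).choose n * 2 ^ (-(n * klBin (k / n) (#A / Fintype.card α))) := by
  set N := Fintype.card α
  set p : ℝ := #A / N
  set x : ℝ := k / n
  set bad := {s ∈ powersetCard n (univ : Finset α) | #(s ∩ A) ≤ k}
  have hN : (N : ℝ) ≠ 0 := fun h => by simp [p, h] at hp0
  set u := x / p
  set v := (1 - x) / (1 - p)
  have hu : 0 ≤ u := by positivity
  have huv : u ≤ v := by
    rw [div_le_div_iff₀ hp0 (sub_pos.2 hp1)]
    nlinarith
  have hcompl : (#Aᶜ : ℝ) / N = 1 - p := by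
    rw [card_compl, Nat.cast_sub (card_le_univ A), sub_div, div_self hN]
  have hmean : u + #Aᶜ / N * (v - u) = 1 := by
    have hp1' : 1 - p ≠ 0 := by linarith
    rw [hcompl]
    simp only [u, v]
    field_simp
    ring
  have hweight : ∀ s ∈ bad,
      u ^ k * v ^ (n - k) ≤ (u + (v - u)) ^ #(s ∩ Aᶜ) * u ^ #(s \ Aᶜ) := by
    intro s hs
    obtain ⟨hsn, hsk⟩ := mem_filter.1 hs
    have hcard := card_sdiff_add_card_inter s A
    rw [(mem_powersetCard.1 hsn).2] at hcard
    rw [add_sub_cancel, ← sdiff_eq_inter_compl, sdiff_compl, inf_eq_inter,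
      show #(s \ A) = n - #(s ∩ A) by omega, mul_comm (v ^ _)]
    exact pow_mul_pow_sub_le_pow_mul_pow_sub hu huv hsk hkn
  have hchernoff : #bad * (u ^ k * v ^ (n - k)) ≤ N.choose n :=
    calc _ ≤ ∑ s ∈ bad, (u + (v - u)) ^ #(s ∩ Aᶜ) * u ^ #(s \ Aᶜ) := by
          rw [← nsmul_eq_mul]
          exact card_nsmul_le_sum _ _ _ hweight
      _ ≤ ∑ s ∈ powersetCard n univ, (u + (v - u)) ^ #(s ∩ Aᶜ) * u ^ #(s \ Aᶜ) :=
          sum_le_sum_of_subset_of_nonneg (filter_subset _ _) fun _ _ _ => by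
            have := hu.trans huv
            positivity
      _ ≤ N.choose n * (u + #Aᶜ / N * (v - u)) ^ n :=
          sum_powersetCard_add_pow_mul_pow_le Aᶜ hn hu (sub_nonneg.2 huv)
      _ = N.choose n := by rw [hmean, one_pow, mul_one]
  have hratio : (2 : ℝ) ^ (n * klBin x p) = u ^ k * v ^ (n - k) := two_rpow_mul_klBin hkn hp0 hp1
  rw [rpow_neg zero_le_two, hratio, ← div_eq_mul_inv,
    le_div_iff₀ (hratio ▸ rpow_pos_of_pos two_pos _)]
  exact hchernoff

theorem Finset.card_filter_card_inter_le_le_of_klBin_eq (A : Finset α) {n k : ℕ} (hkn : k < n)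
    (hnN : n ≤ Fintype.card α) {q ε : ℝ} (hε : 0 < ε) (hxq : (k : ℝ) / n ≤ q)
    (hqp : q < #A / Fintype.card α) (hkl : klBin (k / n) q = -(1 / n) * logb 2 ε) :
    (#{s ∈ powersetCard n univ | #(s ∩ A) ≤ k} : ℝ) ≤ ε * (Fintype.card α).choose n := by
  set N := Fintype.card α
  have hN : (0 : ℝ) < N := by exact_mod_cast (k.zero_le.trans_lt hkn).trans_le hnN
  rcases (card_le_univ A).lt_or_eq with hAN | hAN
  · have hp1 : (#A : ℝ) / N < 1 := by rw [div_lt_one hN]; exact_mod_cast hAN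
    have hp0 : (0 : ℝ) < #A / N := (hxq.trans_lt hqp).trans_le' (by positivity)
    calc (#{s ∈ powersetCard n univ | #(s ∩ A) ≤ k} : ℝ)
        ≤ N.choose n * 2 ^ (-(n * klBin (k / n) (#A / N))) :=
          card_filter_card_inter_le_le A hkn.le hnN hp0 hp1 (hxq.trans hqp.le)
      _ ≤ N.choose n * 2 ^ (-(n * klBin (k / n) q)) := by
          gcongr
          · norm_num
          · exact klBin_le_klBin_of_le (by positivity) hxq hqp.le hp1
      _ = ε * N.choose n := by
          have hn : (n : ℝ) ≠ 0 := Nat.cast_ne_zero.2 (by omega)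
          rw [hkl, show -(n * (-(1 / n) * logb 2 ε)) = logb 2 ε by field_simp,
            rpow_logb two_pos (by norm_num) hε, mul_comm]
  · rw [eq_univ_of_card A hAN, filter_false_of_mem fun s hs => by
      simpa [(mem_powersetCard.1 hs).2] using hkn]
    simp only [card_empty, Nat.cast_zero]
    positivity

theorem Finset.card_filter_lt_card_le (A : Finset α) {n : ℕ} (hnN : n ≤ Fintype.card α) {ε : ℝ}
    (hε : 0 < ε) {Mt : ℕ → ℝ}
    (hMt : ∀ m < n, (m : ℝ) / n ≤ Mt m / Fintype.card α ∧
      klBin (m / n) (Mt m / Fintype.card α) = -(1 / n) * logb 2 ε)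
    (hMtn : Mt n = Fintype.card α) :
    (#{s : Finset α | #s = n ∧ Mt #(s ∩ A) < #A} : ℝ) ≤ ε * (Fintype.card α).choose n := by
  set bad : Finset (Finset α) := {s | #s = n ∧ Mt #(s ∩ A) < #A}
  obtain hempty | hne := bad.eq_empty_or_nonempty
  · simp only [hempty, card_empty, Nat.cast_zero]
    positivity
  obtain ⟨s₀, hs₀, hmax⟩ := exists_max_image bad (fun s => #(s ∩ A)) hne
  obtain ⟨hs₀n, hs₀bad⟩ := (mem_filter.1 hs₀).2
  set k := #(s₀ ∩ A)
  have hkn : k < n := by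
    refine (show k ≤ n from hs₀n ▸ card_le_card inter_subset_left).lt_of_ne fun hkn => ?_
    rw [hkn, hMtn] at hs₀bad
    exact absurd hs₀bad (not_lt.2 (by exact_mod_cast card_le_univ A))
  obtain ⟨hxq, hkl⟩ := hMt k hkn
  have hN : (0 : ℝ) < Fintype.card α := by exact_mod_cast (k.zero_le.trans_lt hkn).trans_le hnN
  calc (#bad : ℝ) ≤ #{s ∈ powersetCard n univ | #(s ∩ A) ≤ k} := by
        refine Nat.cast_le.2 (card_le_card fun s hs => ?_)
        exact mem_filter.2 ⟨mem_powersetCard.2 ⟨subset_univ s, (mem_filter.1 hs).2.1⟩, hmax s hs⟩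
    _ ≤ ε * (Fintype.card α).choose n :=
        card_filter_card_inter_le_le_of_klBin_eq A hkn hnN hε hxq
          (div_lt_div_of_pos_right hs₀bad hN) hkl

theorem Finset.sum_eq_card_inter_of_le_one {X : α → ℕ} (hX : ∀ i, X i ≤ 1) (s : Finset α) :
    ∑ i ∈ s, X i = #(s ∩ ({i | X i = 1} : Finset α)) := by
  rw [inter_filter, inter_univ, card_filter]
  exact sum_congr rfl fun i _ => by have := hX i; split_ifs <;> omega

end Sampling

theorem sampling_confidence_bound_general (N n : ℕ) (hnN : n ≤ N)
    (X : Fin N → ℕ) (hX : ∀ i, X i ≤ 1) (M : ℕ) (hM : M = ∑ i, X i)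
    (ε : ℝ) (hε0 : 0 < ε) (Mt : ℕ → ℝ)
    (hMt : ∀ m : ℕ, m < n →
      ((m : ℝ) / n ≤ Mt m / N ∧ Mt m / N ≤ 1 ∧
        klBin ((m : ℝ) / n) (Mt m / N) = -(1 / (n : ℝ)) * Real.logb 2 ε))
    (hMtn : Mt n = N) :
    ((Finset.univ.filter (fun s : Finset (Fin N) =>
          s.card = n ∧ Mt (∑ i ∈ s, X i) < (M : ℝ))).card : ℝ) / (N.choose n) ≤ ε := by
  simp only [sum_eq_card_inter_of_le_one hX] at hM ⊢
  rw [hM, univ_inter, div_le_iff₀ (by exact_mod_cast Nat.choose_pos hnN)]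
  simpa using card_filter_lt_card_le {i | X i = 1} (by simpa using hnN) hε0
    (fun m hm => by simpa using And.intro (hMt m hm).1 (hMt m hm).2.2) (by simpa using hMtn)

/-- confidence upper bound from simple random sampling: let
`X₁,…,X_N ∈ {0,1}` with `M = ∑ Xᵢ`, let a uniformly random `n`-subset `s` be drawn
without replacement with `m̂ = ∑_{i∈s} Xᵢ`, and `ε ∈ (0,1)`.  If `M̃ = Mt` satisfies,
for `0 ≤ m < n`, `m/n ≤ Mt m/N ≤ 1` and `D(m/n ‖ Mt m/N) = −(1/n) log₂ ε`, and
`Mt n = N`, then `Pr(Mt m̂ < M) ≤ ε`. -/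
theorem sampling_confidence_bound (N n : ℕ) (hn : 0 < n) (hnN : n ≤ N)
    (X : Fin N → ℕ) (hX : ∀ i, X i ≤ 1) (M : ℕ) (hM : M = ∑ i, X i)
    (ε : ℝ) (hε0 : 0 < ε) (hε1 : ε < 1) (Mt : ℕ → ℝ)
    (hMt : ∀ m : ℕ, m < n →
      ((m : ℝ) / n ≤ Mt m / N ∧ Mt m / N ≤ 1 ∧
        klBin ((m : ℝ) / n) (Mt m / N) = -(1 / (n : ℝ)) * Real.logb 2 ε))
    (hMtn : Mt n = N) :
    ((Finset.univ.filter (fun s : Finset (Fin N) =>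
          s.card = n ∧ Mt (∑ i ∈ s, X i) < (M : ℝ))).card : ℝ) / (N.choose n) ≤ ε :=
  sampling_confidence_bound_general N n hnN X hX M hM ε hε0 Mt hMt hMtn
end
end

section
/- For the Gaussian-displaced model ρ as above, the expectation of the test function satisfies E_ρ[Λ_{m,r}(|ω̂ − √(ημ)|²)] = (1/(1+ξ/2))[1 − (−1)^{m+1}((ξ/2)/(1 + r(1+ξ/2)))^{m+1}], where ω̂ is distributed with density ⟨ω|ρ|ω⟩/π over ℂ. -/
open Real MeasureTheory

noncomputable section

/-- Laguerre polynomial `L_n(ν) = (e^ν/n!) dⁿ/dνⁿ (e^{−ν} νⁿ)` (as a function). -/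
def laguerre (n : ℕ) (ν : ℝ) : ℝ :=
  Real.exp ν / n.factorial * iteratedDeriv n (fun t => Real.exp (-t) * t ^ n) ν

/-- Associated Laguerre polynomial `L_n^{(k)}(ν) = (−1)^k dᵏ L_{n+k}(ν)/dνᵏ`. -/
def laguerreAssoc (n k : ℕ) (ν : ℝ) : ℝ :=
  (-1 : ℝ) ^ k * iteratedDeriv k (laguerre (n + k)) ν

/-- The test function `Λ_{m,r}(ν) = e^{−rν}(1+r) L_m^{(1)}((1+r)ν)`. -/
def Lam (m : ℕ) (r ν : ℝ) : ℝ :=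
  Real.exp (-r * ν) * (1 + r) * laguerreAssoc m 1 ((1 + r) * ν)

/-!
Translating by `√(ημ)` and passing to polar coordinates turns the expectation into the Laplace
transform `(1/s) ∫₀^∞ e^{-u/s} Λ_{m,r}(u) du`, where `s = 1 + ξ/2`. Expanding
`L_m^{(1)}(x) = ∑_j C(m+1, j+1) (-x)^j / j!`, every term is a Gamma integral, and the resulting
sum `∑_j (-1)^j C(m+1, j+1) q^{j+1}` with `q = (1+r)/(1/s + r)` is `1 - (1-q)^{m+1}` by the
binomial theorem; finally `1 - q = -(ξ/2)/(1 + rs)`.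
-/

section

open Finset Set

lemma laguerre_eq_sum (n : ℕ) (ν : ℝ) :
    laguerre n ν =
      ∑ k ∈ range (n + 1), (n.choose k : ℝ) * (-1) ^ k / k.factorial * ν ^ k := by
  have hsplit :
      (fun t : ℝ => Real.exp (-t) * t ^ n) = (fun t => Real.exp (-1 * t)) * (· ^ n) := by
    ext t; simp
  have hexp : ContDiffAt ℝ n (fun t : ℝ => Real.exp (-1 * t)) ν := by fun_prop
  have hpow : ContDiffAt ℝ n (fun t : ℝ => t ^ n) ν := by fun_prop
  rw [laguerre, hsplit, iteratedDeriv_mul hexp hpow, mul_sum]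
  refine sum_congr rfl fun k hk => ?_
  have hkn : k ≤ n := Nat.lt_succ_iff.mp (mem_range.mp hk)
  have hfac : (k.factorial : ℝ) * n.descFactorial (n - k) = n.factorial := by
    exact_mod_cast Nat.sub_sub_self hkn ▸ Nat.factorial_mul_descFactorial (Nat.sub_le n k)
  simp only [iteratedDeriv_exp_const_mul, iteratedDeriv_pow, Nat.sub_sub_self hkn]
  have hexp_inv : Real.exp ν * Real.exp (-ν) = 1 := by
    rw [← Real.exp_add, add_neg_cancel, Real.exp_zero]
  rw [neg_one_mul, ← hfac]
  field_simp
  linear_combination (n.choose k : ℝ) * ν ^ k * hexp_inv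

lemma laguerreAssoc_one_eq_sum (m : ℕ) (ν : ℝ) :
    laguerreAssoc m 1 ν =
      ∑ j ∈ range (m + 1),
        ((m + 1).choose (j + 1) : ℝ) * (-1) ^ j / j.factorial * ν ^ j := by
  have hderiv : HasDerivAt (laguerre (m + 1)) (∑ k ∈ range (m + 2),
      ((m + 1).choose k : ℝ) * (-1) ^ k / k.factorial * (k * ν ^ (k - 1))) ν := by
    rw [funext (laguerre_eq_sum (m + 1))]
    exact HasDerivAt.fun_sum fun k _ => (hasDerivAt_pow k ν).const_mul _
  rw [laguerreAssoc, iteratedDeriv_one, hderiv.deriv, sum_range_succ']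
  simp only [Nat.cast_zero, zero_mul, mul_zero, add_zero, pow_one, neg_one_mul, ← sum_neg_distrib]
  refine sum_congr rfl fun j _ => ?_
  rw [Nat.factorial_succ, Nat.add_sub_cancel]
  push_cast
  field_simp
  ring

lemma integral_pow_mul_exp_neg_mul (n : ℕ) {a : ℝ} (ha : 0 < a) :
    ∫ t in Ioi (0 : ℝ), t ^ n * Real.exp (-(a * t)) = n.factorial / a ^ (n + 1) := by
  have h := Real.integral_rpow_mul_exp_neg_mul_Ioi (a := n + 1) (by positivity) ha
  rw [add_sub_cancel_right, Real.Gamma_nat_eq_factorial, ← Nat.cast_succ, Real.rpow_natCast,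
    one_div, inv_pow] at h
  rw [div_eq_inv_mul, ← Nat.succ_eq_add_one, ← h]
  refine setIntegral_congr_fun measurableSet_Ioi fun t _ => ?_
  rw [Real.rpow_natCast]

lemma integrableOn_pow_mul_exp_neg_mul (n : ℕ) {a : ℝ} (ha : 0 < a) :
    IntegrableOn (fun t : ℝ => t ^ n * Real.exp (-(a * t))) (Ioi 0) :=
  Integrable.of_integral_ne_zero <| by
    rw [integral_pow_mul_exp_neg_mul n ha]; positivity

lemma sum_range_neg_one_pow_mul_choose_succ_mul_pow (m : ℕ) (q : ℝ) :
    ∑ j ∈ range (m + 1), (-1 : ℝ) ^ j * ((m + 1).choose (j + 1) : ℝ) * q ^ (j + 1) =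
      1 - (1 - q) ^ (m + 1) := by
  conv_rhs => rw [sub_eq_neg_add 1 q, add_pow, sum_range_succ']
  simp only [one_pow, mul_one, pow_zero, Nat.choose_zero_right, Nat.cast_one, sub_add_cancel_right,
    ← sum_neg_distrib, neg_pow q]
  refine sum_congr rfl fun j _ => ?_
  ring

theorem Complex.integral_comp_norm_sq {E : Type*} [NormedAddCommGroup E] [NormedSpace ℝ E]
    (g : ℝ → E) : ∫ z : ℂ, g (‖z‖ ^ 2) = π • ∫ u in Ioi (0 : ℝ), g u := by
  have hsubst : ∫ y in Ioi (0 : ℝ), (2 * y) • g (y ^ 2) = ∫ u in Ioi (0 : ℝ), g u := by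
    rw [← integral_comp_rpow_Ioi g two_ne_zero]
    refine setIntegral_congr_fun measurableSet_Ioi fun y _ => ?_
    norm_num
  rw [integral_fun_norm_addHaar volume (fun y => g (y ^ 2)), Complex.finrank_real_complex,
    Measure.real, Complex.volume_ball, ← hsubst]
  simp only [ENNReal.toReal_mul, ENNReal.toReal_pow, ENNReal.toReal_ofReal zero_le_one, one_pow,
    one_mul, ENNReal.coe_toReal, NNReal.coe_real_pi, ← integral_smul, smul_smul,
    ← Nat.cast_smul_eq_nsmul ℝ]
  congr with y
  ring_nf

lemma exp_neg_mul_mul_Lam_eq_sum (m : ℕ) (b r u : ℝ) :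
    Real.exp (-b * u) * Lam m r u =
      ∑ j ∈ range (m + 1), (-1 : ℝ) ^ j * ((m + 1).choose (j + 1) : ℝ) * (1 + r) ^ (j + 1) /
        j.factorial * (u ^ j * Real.exp (-((b + r) * u))) := by
  have hexp : Real.exp (-b * u) * Real.exp (-r * u) = Real.exp (-((b + r) * u)) := by
    rw [← Real.exp_add]; ring_nf
  rw [Lam, laguerreAssoc_one_eq_sum, mul_sum, mul_sum]
  refine sum_congr rfl fun j _ => ?_
  rw [← hexp, mul_pow]
  ring

lemma integral_exp_neg_mul_mul_Lam (m : ℕ) {b r : ℝ} (hbr : 0 < b + r) :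
    ∫ u in Ioi (0 : ℝ), Real.exp (-b * u) * Lam m r u = 1 - ((b - 1) / (b + r)) ^ (m + 1) := by
  calc ∫ u in Ioi (0 : ℝ), Real.exp (-b * u) * Lam m r u
      = ∑ j ∈ range (m + 1), (-1) ^ j * ((m + 1).choose (j + 1) : ℝ) * (1 + r) ^ (j + 1) /
          j.factorial * ∫ u in Ioi (0 : ℝ), u ^ j * Real.exp (-((b + r) * u)) := by
        simp_rw [exp_neg_mul_mul_Lam_eq_sum]
        rw [integral_finsetSum _ fun j _ => (integrableOn_pow_mul_exp_neg_mul j hbr).const_mul _]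
        simp_rw [integral_const_mul]
    _ = ∑ j ∈ range (m + 1),
          (-1) ^ j * ((m + 1).choose (j + 1) : ℝ) * ((1 + r) / (b + r)) ^ (j + 1) := by
        refine sum_congr rfl fun j _ => ?_
        rw [integral_pow_mul_exp_neg_mul j hbr, div_pow]
        field_simp
    _ = 1 - ((b - 1) / (b + r)) ^ (m + 1) := by
        rw [sum_range_neg_one_pow_mul_choose_succ_mul_pow]
        field_simp
        ring_nf

end

theorem test_function_expectation_general (m : ℕ) (r η μ ξ : ℝ) (hr : 0 < r) (hξ : 0 ≤ ξ) :
    (∫ ω : ℂ, (1 / (π * (1 + ξ / 2))) *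
        Real.exp (-(‖ω - (Real.sqrt (η * μ) : ℂ)‖ ^ 2) / (1 + ξ / 2)) *
        Lam m r (‖ω - (Real.sqrt (η * μ) : ℂ)‖ ^ 2)) =
      (1 / (1 + ξ / 2)) *
        (1 - (-1 : ℝ) ^ (m + 1) * ((ξ / 2) / (1 + r * (1 + ξ / 2))) ^ (m + 1)) := by
  set s : ℝ := 1 + ξ / 2
  have hs : 0 < s := by positivity
  set integrand : ℝ → ℝ := fun u => 1 / (π * s) * Real.exp (-u / s) * Lam m r u
  calc (∫ ω : ℂ, integrand (‖ω - (Real.sqrt (η * μ) : ℂ)‖ ^ 2))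
      = π * ∫ u in Set.Ioi (0 : ℝ), integrand u := by
        rw [integral_sub_right_eq_self fun ω : ℂ => integrand (‖ω‖ ^ 2),
          Complex.integral_comp_norm_sq, smul_eq_mul]
    _ = 1 / s * ∫ u in Set.Ioi (0 : ℝ), Real.exp (-(1 / s) * u) * Lam m r u := by
        rw [← integral_const_mul, ← integral_const_mul]
        refine setIntegral_congr_fun measurableSet_Ioi fun u _ => ?_
        simp only [integrand, neg_div, neg_mul, one_div_mul_eq_div]
        field_simp
    _ = 1 / s * (1 - ((1 / s - 1) / (1 / s + r)) ^ (m + 1)) := by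
        rw [integral_exp_neg_mul_mul_Lam m (by positivity)]
    _ = 1 / s * (1 - (-1) ^ (m + 1) * ((ξ / 2) / (1 + r * s)) ^ (m + 1)) := by
        rw [← neg_pow]
        congr 3
        field_simp
        ring

/-- for the Gaussian-displaced model, whose heterodyne outcome density is
`(1/(π(1+ξ/2))) e^{−|ω−√(ημ)|²/(1+ξ/2)}`, the expectation of the test function is
`E[Λ_{m,r}(|ω̂−√(ημ)|²)] = (1/(1+ξ/2))[1 − (−1)^{m+1}((ξ/2)/(1+r(1+ξ/2)))^{m+1}]`. -/
theorem test_function_expectation (m : ℕ) (r η μ ξ : ℝ) (hr : 0 < r) (hξ : 0 ≤ ξ)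
    (hη0 : 0 < η) (hη1 : η ≤ 1) (hμ : 0 < μ) :
    (∫ ω : ℂ, (1 / (π * (1 + ξ / 2))) *
        Real.exp (-(‖ω - (Real.sqrt (η * μ) : ℂ)‖ ^ 2) / (1 + ξ / 2)) *
        Lam m r (‖ω - (Real.sqrt (η * μ) : ℂ)‖ ^ 2)) =
      (1 / (1 + ξ / 2)) *
        (1 - (-1 : ℝ) ^ (m + 1) * ((ξ / 2) / (1 + r * (1 + ξ / 2))) ^ (m + 1)) :=
  test_function_expectation_general m r η μ ξ hr hξ
end
end
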